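/- arXiv:0906.0154 — 3 statements merged into one kernel-verified Lean document; each statement's English description precedes it below -/
import Mathlib

section
/- Let Σ be an X-symmetric graph of valency v ≥ 2, and let Θ be a self-paired X-symmetric orbit on the k-double stars of Σ, where 1 ≤ k ≤ v−1. Set Γ = Π(Σ,Θ), S = St(Θ), S_τ = {s(τ,S) ∈ S : S ⊆ Σ(τ), |S| = k} for τ ∈ V(Σ), and B = {S_τ : τ ∈ V(Σ)}. Then Γ is X-symmetric, B is a nontrivial X-invariant partition of V(Γ) = S, the quotient Γ_B has valency ≥ 2, Γ is not a multicover of Γ_B, the map τ ↦ S_τ is a graph isomorphism from Σ to Γ_B, and for B = S_τ the design D(B) is isomorphic to the dual of the design 𝔻(τ) with point set Σ(τ) and block set S_τ in which σ is incident with s(τ,S) iff σ ∈ S. -/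
open Pointwise

/-- A 2-arc `(t.1, t.2.1, t.2.2)` of a simple graph. -/
def IsArc2 {V : Type*} (G : SimpleGraph V) (t : V × V × V) : Prop :=
  G.Adj t.1 t.2.1 ∧ G.Adj t.2.1 t.2.2 ∧ t.1 ≠ t.2.2

/-- A 3-arc `(t.1, t.2.1, t.2.2.1, t.2.2.2)` of a simple graph. -/
def IsArc3 {V : Type*} (G : SimpleGraph V) (t : V × V × V × V) : Prop :=
  G.Adj t.1 t.2.1 ∧ G.Adj t.2.1 t.2.2.1 ∧ G.Adj t.2.2.1 t.2.2.2 ∧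
    t.1 ≠ t.2.2.1 ∧ t.2.1 ≠ t.2.2.2

/-- The reverse of a 3-arc. -/
def rev3 {V : Type*} (t : V × V × V × V) : V × V × V × V :=
  (t.2.2.2, t.2.2.1, t.2.1, t.1)

/-- `G` is regular of valency `d`. -/
def Regular {V : Type*} (G : SimpleGraph V) (d : ℕ) : Prop :=
  ∀ u : V, (G.neighborSet u).ncard = d

/-- The action of `X` preserves the adjacency of `G`. -/
def AdjPres (X : Type*) {V : Type*} [Group X] [MulAction X V] (G : SimpleGraph V) : Prop :=
  ∀ (x : X) (u w : V), G.Adj u w → G.Adj (x • u) (x • w)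

/-- `X` is transitive on the vertices. -/
def VertexTrans (X V : Type*) [Group X] [MulAction X V] : Prop :=
  ∀ u w : V, ∃ x : X, x • u = w

/-- `X` is transitive on the arcs of `G`. -/
def ArcTrans (X : Type*) {V : Type*} [Group X] [MulAction X V] (G : SimpleGraph V) : Prop :=
  ∀ a b : V × V, G.Adj a.1 a.2 → G.Adj b.1 b.2 → ∃ x : X, x • a = b

/-- `G` is `X`-symmetric. -/
def XSymm (X : Type*) {V : Type*} [Group X] [MulAction X V] (G : SimpleGraph V) : Prop :=
  AdjPres X G ∧ VertexTrans X V ∧ ArcTrans X G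

/-- `X` is transitive on the 2-arcs of `G`. -/
def Arc2Trans (X : Type*) {V : Type*} [Group X] [MulAction X V] (G : SimpleGraph V) : Prop :=
  ∀ s t : V × V × V, IsArc2 G s → IsArc2 G t → ∃ x : X, x • s = t

/-- `X` is transitive on the 3-arcs of `G`. -/
def Arc3Trans (X : Type*) {V : Type*} [Group X] [MulAction X V] (G : SimpleGraph V) : Prop :=
  ∀ s t : V × V × V × V, IsArc3 G s → IsArc3 G t → ∃ x : X, x • s = t

/-- `G` is `(X,2)`-arc-transitive. -/
def Arc2TransGraph (X : Type*) {V : Type*} [Group X] [MulAction X V] (G : SimpleGraph V) : Prop :=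
  XSymm X G ∧ Arc2Trans X G

/-- `X` is regular on the 2-arcs of `G`, i.e. `G` is `(X,2)`-arc-regular
(together with `X`-symmetry). -/
def Arc2Reg (X : Type*) {V : Type*} [Group X] [MulAction X V] (G : SimpleGraph V) : Prop :=
  XSymm X G ∧ ∀ s t : V × V × V, IsArc2 G s → IsArc2 G t → ∃! x : X, x • s = t

/-- `Δ` is a self-paired `X`-orbit on the set of 3-arcs of `G`. -/
def SelfPairedOrbit3 (X : Type*) {V : Type*} [Group X] [MulAction X V] (G : SimpleGraph V)
    (Δ : Set (V × V × V × V)) : Prop :=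
  (∀ t ∈ Δ, IsArc3 G t) ∧ (∃ t₀ ∈ Δ, Δ = MulAction.orbit X t₀) ∧ ∀ t ∈ Δ, rev3 t ∈ Δ

/-- `ℓ₁(Δ) = k`:  for each `(τ₁,τ,σ,σ₁) ∈ Δ`, the orbit of `σ₁` under the pointwise
stabilizer of `(τ₁,τ,σ)` in `X` has exactly `k` elements. -/
def Ell1Eq (X : Type*) {V : Type*} [Group X] [MulAction X V]
    (Δ : Set (V × V × V × V)) (k : ℕ) : Prop :=
  ∀ t ∈ Δ, ({u : V | ∃ x : X, x • t.1 = t.1 ∧ x • t.2.1 = t.2.1 ∧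
    x • t.2.2.1 = t.2.2.1 ∧ x • t.2.2.2 = u}).ncard = k

/-- For a graph `H` whose vertices carry an induced `X`-action described by a relation
`M x z w` (“`x` maps `z` to `w`”), `H` is `X`-symmetric:  `X` preserves adjacency and is
transitive on vertices and on arcs. -/
def RelXSymm (X : Type*) {W : Type*} [Group X] (M : X → W → W → Prop)
    (H : SimpleGraph W) : Prop :=
  (∀ (x : X) (z w z' w' : W), H.Adj z w → M x z z' → M x w w' → H.Adj z' w') ∧
  (∀ z w : W, ∃ x : X, M x z w) ∧
  (∀ z₁ z₂ w₁ w₂ : W, H.Adj z₁ z₂ → H.Adj w₁ w₂ → ∃ x : X, M x z₁ w₁ ∧ M x z₂ w₂)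

/-- `X` is transitive on the 2-arcs of `H`, the action being described by `M`. -/
def RelArc2Trans (X : Type*) {W : Type*} [Group X] (M : X → W → W → Prop)
    (H : SimpleGraph W) : Prop :=
  ∀ z₁ z₂ z₃ w₁ w₂ w₃ : W, H.Adj z₁ z₂ → H.Adj z₂ z₃ → z₁ ≠ z₃ →
    H.Adj w₁ w₂ → H.Adj w₂ w₃ → w₁ ≠ w₃ →
    ∃ x : X, M x z₁ w₁ ∧ M x z₂ w₂ ∧ M x z₃ w₃

/-- `X` is regular on the arcs of `H`, the action being described by `M`. -/
def RelArc1Reg (X : Type*) {W : Type*} [Group X] (M : X → W → W → Prop)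
    (H : SimpleGraph W) : Prop :=
  ∀ z₁ z₂ w₁ w₂ : W, H.Adj z₁ z₂ → H.Adj w₁ w₂ →
    ∃! x : X, M x z₁ w₁ ∧ M x z₂ w₂

/-- `X` is regular on the 2-arcs of `H`, the action being described by `M`. -/
def RelArc2Reg (X : Type*) {W : Type*} [Group X] (M : X → W → W → Prop)
    (H : SimpleGraph W) : Prop :=
  ∀ z₁ z₂ z₃ w₁ w₂ w₃ : W, H.Adj z₁ z₂ → H.Adj z₂ z₃ → z₁ ≠ z₃ →
    H.Adj w₁ w₂ → H.Adj w₂ w₃ → w₁ ≠ w₃ →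
    ∃! x : X, M x z₁ w₁ ∧ M x z₂ w₂ ∧ M x z₃ w₃

/-- The neighbourhood `Γ(B) = ⋃_{u ∈ B} Γ(u)` of a set of vertices. -/
def nbhd {V : Type*} (Γ : SimpleGraph V) (B : Set V) : Set V :=
  ⋃ u ∈ B, Γ.neighborSet u

/-- Two sets of vertices are adjacent if they are distinct and joined by an edge. -/
def QAdj {V : Type*} (Γ : SimpleGraph V) (B C : Set V) : Prop :=
  B ≠ C ∧ ∃ u ∈ B, ∃ w ∈ C, Γ.Adj u w

/-- The quotient graph of `Γ` with respect to a partition `P` of its vertex set. -/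
def quotGraph {V : Type*} (Γ : SimpleGraph V) (P : Set (Set V)) : SimpleGraph ↥P :=
  SimpleGraph.fromRel (fun B C => ∃ u ∈ (B : Set V), ∃ w ∈ (C : Set V), Γ.Adj u w)

/-- `P` is an `X`-invariant partition of the vertex set. -/
def XInvariantPartition (X : Type*) {V : Type*} [Group X] [MulAction X V]
    (P : Set (Set V)) : Prop :=
  Setoid.IsPartition P ∧ ∀ (x : X), ∀ B ∈ P, x • B ∈ P

/-- The partition `P` is nontrivial: `1 < |B| < |V|` for each block `B`. -/
def NontrivialBlocks {V : Type*} [Fintype V] (P : Set (Set V)) : Prop :=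
  ∀ B ∈ P, 1 < B.ncard ∧ B.ncard < Fintype.card V

/-- `x ∈ X` maps the block `B` to the block `C`. -/
def BlockMaps (X : Type*) {V : Type*} [Group X] [MulAction X V] (P : Set (Set V))
    (x : X) (B C : ↥P) : Prop :=
  (C : Set V) = x • (B : Set V)

/-- A `k`-star of `G`, given as a pair `(τ, S)` with `S ⊆ G(τ)` and `|S| = k`. -/
def IsStar {V : Type*} (G : SimpleGraph V) (k : ℕ) (s : V × Set V) : Prop :=
  s.2 ⊆ G.neighborSet s.1 ∧ s.2.ncard = k

/-- The star `s` is symmetric: its stabilizer in `X` is transitive on `s.2`. -/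
def StarSymmetric (X : Type*) {V : Type*} [Group X] [MulAction X V] (s : V × Set V) : Prop :=
  ∀ a ∈ s.2, ∀ b ∈ s.2, ∃ x : X, x • s = s ∧ x • a = b

/-- A `k`-double star of `G`: a pair of `k`-stars `(s(τ,L), s(σ,R))` with `σ ∈ L`, `τ ∈ R`. -/
def IsDStar {V : Type*} (G : SimpleGraph V) (k : ℕ)
    (d : (V × Set V) × (V × Set V)) : Prop :=
  IsStar G k d.1 ∧ IsStar G k d.2 ∧ d.2.1 ∈ d.1.2 ∧ d.1.1 ∈ d.2.2

/-- `St(Θ)`: the set of stars occurring as a coordinate of a member of `Θ`. -/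
def StSet {V : Type*} (Θ : Set ((V × Set V) × (V × Set V))) : Set (V × Set V) :=
  {s | ∃ d ∈ Θ, s = d.1 ∨ s = d.2}

/-- A set of stars is `X`-symmetric: it is nonempty, `X`-transitive, and some (hence
every) member is a symmetric star. -/
def StarsXSymm (X : Type*) {V : Type*} [Group X] [MulAction X V]
    (S : Set (V × Set V)) : Prop :=
  S.Nonempty ∧ (∀ s ∈ S, ∀ t ∈ S, ∃ x : X, x • s = t) ∧ ∃ s ∈ S, StarSymmetric X s

/-- `Θ` is a self-paired `X`-symmetric orbit on the `k`-double stars of `G`. -/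
def SelfPairedSymmOrbitDStar (X : Type*) {V : Type*} [Group X] [MulAction X V]
    (G : SimpleGraph V) (k : ℕ) (Θ : Set ((V × Set V) × (V × Set V))) : Prop :=
  (∀ d ∈ Θ, IsDStar G k d) ∧ (∃ d₀ ∈ Θ, Θ = MulAction.orbit X d₀) ∧
  (∀ d ∈ Θ, (d.2, d.1) ∈ Θ) ∧ StarsXSymm X (StSet Θ)

/-- The double star graph `Π(G,Θ)` on the star set of `Θ`. -/
def PiGraph {V : Type*} (Θ : Set ((V × Set V) × (V × Set V))) :
    SimpleGraph ↥(StSet Θ) :=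
  SimpleGraph.fromRel (fun l r => ((l : V × Set V), (r : V × Set V)) ∈ Θ)

/-- The block `S_τ` of all stars in `St(Θ)` with centre `τ`. -/
def SBlock {V : Type*} (Θ : Set ((V × Set V) × (V × Set V))) (τ : V) :
    Set ↥(StSet Θ) :=
  {s | (s : V × Set V).1 = τ}

/-- `x ∈ X` maps the star `s` to the star `t`. -/
def StarMaps (X : Type*) {V : Type*} [Group X] [MulAction X V]
    (Θ : Set ((V × Set V) × (V × Set V))) (x : X) (s t : ↥(StSet Θ)) : Prop :=
  (t : V × Set V) = x • (s : V × Set V)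

/-!
Every pair in `Θ` consists of stars with adjacent centres, so `Θ` is already irreflexive and
(being self-paired) symmetric: adjacency in `Π(G,Θ)` is exactly membership in `Θ`, and
`X`-symmetry of `Π(G,Θ)` is transitivity of `X` on `Θ` and on `St(Θ)`. Since the stars in
`St(Θ)` are symmetric, a star `s(τ,S)` has a `Θ`-partner centred at each `σ ∈ S`; hence
`S_τ` sends an edge to `S_σ` iff `G.Adj τ σ`, and a star of `S_τ` sees `S_σ` iff `σ ∈ S`.
Finally, `k < v` together with arc-transitivity of `G` gives, for every neighbour `σ` of `τ`,
a star of `S_τ` missing `σ`, which is what keeps `Π(G,Θ)` from being a multicover.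
-/

theorem Setoid.isPartition_setOf_eq_preimage_singleton {α β : Type*} {f : α → β}
    (hf : Function.Surjective f) : Setoid.IsPartition {S : Set α | ∃ b, S = f ⁻¹' {b}} := by
  refine ⟨fun ⟨b, hb⟩ => ?_, fun a => ⟨f ⁻¹' {f a}, ⟨⟨f a, rfl⟩, rfl⟩, ?_⟩⟩
  · obtain ⟨a, rfl⟩ := hf b
    exact (hb ▸ Set.mem_preimage.2 rfl : a ∈ (∅ : Set α))
  · rintro _ ⟨⟨b, rfl⟩, hab⟩
    rw [(hab : f a = b)]

section

variable {V X : Type*} [Group X] [MulAction X V]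

theorem ArcTrans.exists_smul_eq_of_adj {G : SimpleGraph V} (h : ArcTrans X G) {τ σ σ' : V}
    (hσ : G.Adj τ σ) (hσ' : G.Adj τ σ') : ∃ x : X, x • τ = τ ∧ x • σ = σ' := by
  obtain ⟨x, hx⟩ := h (τ, σ) (τ, σ') hσ hσ'
  exact ⟨x, congrArg Prod.fst hx, congrArg Prod.snd hx⟩

theorem StarSymmetric.smul {s : V × Set V} (h : StarSymmetric X s) (x : X) :
    StarSymmetric X (x • s) := by
  rintro _ ⟨a, ha, rfl⟩ _ ⟨b, hb, rfl⟩
  obtain ⟨y, hys, hya⟩ := h a ha b hb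
  refine ⟨x * y * x⁻¹, ?_, ?_⟩ <;> simp only [mul_smul, inv_smul_smul, hys, hya]

theorem IsDStar.adj {G : SimpleGraph V} {k : ℕ} {d : (V × Set V) × (V × Set V)}
    (h : IsDStar G k d) : G.Adj d.1.1 d.2.1 :=
  h.1.1 h.2.2.1

namespace SelfPairedSymmOrbitDStar

variable {G : SimpleGraph V} {k : ℕ} {Θ : Set ((V × Set V) × (V × Set V))}
  (hΘ : SelfPairedSymmOrbitDStar X G k Θ)
include hΘ

theorem smul_mem (x : X) {d : (V × Set V) × (V × Set V)} (hd : d ∈ Θ) : x • d ∈ Θ := by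
  obtain ⟨d₀, -, rfl⟩ := hΘ.2.1
  exact MulAction.mem_orbit_of_mem_orbit x hd

theorem exists_smul_eq {d d' : (V × Set V) × (V × Set V)} (hd : d ∈ Θ) (hd' : d' ∈ Θ) :
    ∃ x : X, x • d = d' := by
  obtain ⟨d₀, -, rfl⟩ := hΘ.2.1
  rw [← MulAction.orbit_eq_iff.2 hd] at hd'
  exact hd'

theorem smul_mem_stSet (x : X) {s : V × Set V} (hs : s ∈ StSet Θ) : x • s ∈ StSet Θ := by
  obtain ⟨d, hd, hsd⟩ := hs
  exact ⟨x • d, hΘ.smul_mem x hd, by rcases hsd with rfl | rfl <;> simp⟩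

theorem isStar {s : V × Set V} (hs : s ∈ StSet Θ) : IsStar G k s := by
  obtain ⟨d, hd, rfl | rfl⟩ := hs
  exacts [(hΘ.1 d hd).1, (hΘ.1 d hd).2.1]

theorem starSymmetric {s : V × Set V} (hs : s ∈ StSet Θ) : StarSymmetric X s := by
  obtain ⟨s₀, hs₀, hsymm⟩ := hΘ.2.2.2.2.2
  obtain ⟨x, rfl⟩ := hΘ.2.2.2.2.1 s₀ hs₀ s hs
  exact hsymm.smul x

/-- The partner is found by moving a member of `Θ` with first coordinate `s` by the
stabiliser of `s`, which is transitive on `s.2`. -/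
theorem exists_partner {s : V × Set V} (hs : s ∈ StSet Θ) {σ : V} (hσ : σ ∈ s.2) :
    ∃ t ∈ StSet Θ, t.1 = σ ∧ (s, t) ∈ Θ := by
  obtain ⟨d₀, hd₀, -⟩ := hΘ.2.1
  obtain ⟨x, hx⟩ := hΘ.2.2.2.2.1 d₀.1 ⟨d₀, hd₀, Or.inl rfl⟩ s hs
  set d := x • d₀
  have hd : d ∈ Θ := hΘ.smul_mem x hd₀
  have hd1 : d.1 = s := hx
  obtain ⟨y, hys, hyσ⟩ := hΘ.starSymmetric hs _ (hd1 ▸ (hΘ.1 d hd).2.2.1) σ hσ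
  have hyd : (s, y • d.2) ∈ Θ := by
    have hyd' : y • d = (s, y • d.2) := Prod.ext (by rw [Prod.smul_fst, hd1, hys]) rfl
    exact hyd' ▸ hΘ.smul_mem y hd
  exact ⟨y • d.2, ⟨_, hyd, Or.inr rfl⟩, hyσ, hyd⟩

theorem piGraph_adj_iff {s t : ↥(StSet Θ)} :
    (PiGraph Θ).Adj s t ↔ ((s : V × Set V), (t : V × Set V)) ∈ Θ := by
  refine (SimpleGraph.fromRel_adj _ s t).trans ⟨?_, fun h => ⟨?_, Or.inl h⟩⟩
  · rintro ⟨-, h | h⟩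
    exacts [h, hΘ.2.2.1 _ h]
  · rintro rfl
    exact (hΘ.1 _ h).adj.ne rfl

theorem exists_adj_mem_sBlock_iff (s : ↥(StSet Θ)) (σ : V) :
    (∃ t ∈ SBlock Θ σ, (PiGraph Θ).Adj s t) ↔ σ ∈ (s : V × Set V).2 := by
  constructor
  · rintro ⟨t, rfl, hst⟩
    exact (hΘ.1 _ (hΘ.piGraph_adj_iff.1 hst)).2.2.1
  · intro hσ
    obtain ⟨t, ht, rfl, hst⟩ := hΘ.exists_partner s.2 hσ
    exact ⟨⟨t, ht⟩, rfl, hΘ.piGraph_adj_iff.2 hst⟩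

theorem relXSymm : RelXSymm X (StarMaps X Θ) (PiGraph Θ) := by
  refine ⟨fun x z w z' w' hzw hz hw => ?_, fun z w => ?_, fun z₁ z₂ w₁ w₂ hz hw => ?_⟩
  · rw [hΘ.piGraph_adj_iff, hz, hw]
    exact hΘ.smul_mem x (hΘ.piGraph_adj_iff.1 hzw)
  · obtain ⟨x, hx⟩ := hΘ.2.2.2.2.1 _ z.2 _ w.2
    exact ⟨x, hx.symm⟩
  · obtain ⟨x, hx⟩ := hΘ.exists_smul_eq (hΘ.piGraph_adj_iff.1 hz) (hΘ.piGraph_adj_iff.1 hw)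
    exact ⟨x, (congrArg Prod.fst hx).symm, (congrArg Prod.snd hx).symm⟩

theorem setOf_starMaps_sBlock (x : X) (τ : V) :
    {t : ↥(StSet Θ) | ∃ s ∈ SBlock Θ τ, StarMaps X Θ x s t} = SBlock Θ (x • τ) := by
  ext t
  constructor
  · rintro ⟨s, hs, ht⟩
    change (t : V × Set V).1 = x • τ
    rw [ht]
    exact congrArg (x • ·) hs
  · intro ht
    refine ⟨⟨x⁻¹ • (t : V × Set V), hΘ.smul_mem_stSet x⁻¹ t.2⟩, ?_, (smul_inv_smul x _).symm⟩
    change (t : V × Set V).1 = x • τ at ht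
    change x⁻¹ • (t : V × Set V).1 = τ
    rw [ht, inv_smul_smul]

theorem surjective_fst (hvt : VertexTrans X V) :
    Function.Surjective fun s : ↥(StSet Θ) => (s : V × Set V).1 := by
  intro τ
  obtain ⟨s₀, hs₀⟩ := hΘ.2.2.2.1
  obtain ⟨x, hx⟩ := hvt s₀.1 τ
  exact ⟨⟨x • s₀, hΘ.smul_mem_stSet x hs₀⟩, hx⟩

theorem sBlock_nonempty (hvt : VertexTrans X V) (τ : V) : (SBlock Θ τ).Nonempty :=
  hΘ.surjective_fst hvt τ

theorem sBlock_injective (hvt : VertexTrans X V) : Function.Injective (SBlock Θ) := by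
  intro τ σ h
  obtain ⟨s, hs⟩ := hΘ.sBlock_nonempty hvt τ
  exact hs.symm.trans (h ▸ hs : s ∈ SBlock Θ σ)

theorem qAdj_sBlock_iff (hsym : XSymm X G) {τ σ : V} :
    QAdj (PiGraph Θ) (SBlock Θ τ) (SBlock Θ σ) ↔ G.Adj τ σ := by
  constructor
  · rintro ⟨-, s, rfl, t, rfl, hst⟩
    exact (hΘ.1 _ (hΘ.piGraph_adj_iff.1 hst)).adj
  · intro hτσ
    obtain ⟨d₀, hd₀, -⟩ := hΘ.2.1
    obtain ⟨x, hx⟩ := hsym.2.2 (d₀.1.1, d₀.2.1) (τ, σ) (hΘ.1 _ hd₀).adj hτσ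
    have hd : x • d₀ ∈ Θ := hΘ.smul_mem x hd₀
    refine ⟨fun h => hτσ.ne (hΘ.sBlock_injective hsym.2.1 h),
      ⟨_, _, hd, Or.inl rfl⟩, congrArg Prod.fst hx, ⟨_, _, hd, Or.inr rfl⟩,
      congrArg Prod.snd hx, hΘ.piGraph_adj_iff.2 hd⟩

theorem setOf_qAdj_sBlock (hsym : XSymm X G) (τ : V) :
    {σ : V | QAdj (PiGraph Θ) (SBlock Θ τ) (SBlock Θ σ)} = {σ : V | G.Adj τ σ} :=
  Set.ext fun _ => hΘ.qAdj_sBlock_iff hsym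

/-- If every star of `S_τ` contained the neighbour `σ`, then by arc-transitivity it would
contain every neighbour of `τ`, forcing `k = v`. -/
theorem exists_mem_sBlock_not_mem (hsym : XSymm X G) {v : ℕ} (hreg : Regular G v)
    (hkv : k < v) {τ σ : V} (hτσ : G.Adj τ σ) :
    ∃ s ∈ SBlock Θ τ, σ ∉ (s : V × Set V).2 := by
  by_contra! hcon
  obtain ⟨s, hs⟩ := hΘ.sBlock_nonempty hsym.2.1 τ
  have hstar : IsStar G k s := hΘ.isStar s.2
  have hnbhd : G.neighborSet τ ⊆ (s : V × Set V).2 := by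
    intro σ' hσ'
    obtain ⟨x, hxτ, rfl⟩ := hsym.2.2.exists_smul_eq_of_adj hτσ hσ'
    have hxs : (⟨x⁻¹ • (s : V × Set V), hΘ.smul_mem_stSet x⁻¹ s.2⟩ : ↥(StSet Θ)) ∈
        SBlock Θ τ := by
      change x⁻¹ • (s : V × Set V).1 = τ
      rw [hs, inv_smul_eq_iff, hxτ]
    obtain ⟨b, hb, rfl⟩ := hcon _ hxs
    simpa using hb
  have : (s : V × Set V).2 = G.neighborSet τ := (hs ▸ hstar.1).antisymm hnbhd
  have : k = v := by rw [← hstar.2, this, hreg τ]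
  omega

theorem one_lt_ncard_sBlock [Finite V] (hsym : XSymm X G) {v : ℕ} (hreg : Regular G v)
    (hk : 1 ≤ k) (hkv : k < v) (τ : V) : 1 < (SBlock Θ τ).ncard := by
  obtain ⟨s, hs⟩ := hΘ.sBlock_nonempty hsym.2.1 τ
  obtain ⟨σ, hσ⟩ : (s : V × Set V).2.Nonempty :=
    Set.nonempty_of_ncard_ne_zero (by rw [(hΘ.isStar s.2).2]; omega)
  obtain ⟨s', hs', hσ'⟩ :=
    hΘ.exists_mem_sBlock_not_mem hsym hreg hkv (hs ▸ (hΘ.isStar s.2).1 hσ)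
  exact (Set.one_lt_ncard_iff (Set.toFinite _)).2 ⟨s, s', hs, hs', fun h => hσ' (h ▸ hσ)⟩

theorem ncard_sBlock_lt [Finite V] (hvt : VertexTrans X V) {τ σ : V} (hτσ : G.Adj τ σ) :
    (SBlock Θ τ).ncard < (Set.univ : Set ↥(StSet Θ)).ncard := by
  obtain ⟨t, ht⟩ := hΘ.sBlock_nonempty hvt σ
  refine Set.ncard_lt_ncard ⟨Set.subset_univ _, fun hsub => hτσ.ne ?_⟩
  exact (hsub (Set.mem_univ t)).symm.trans ht

theorem nbhd_sBlock_inter_ne (hsym : XSymm X G) {v : ℕ} (hreg : Regular G v) (hkv : k < v)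
    {τ σ : V} (hτσ : G.Adj τ σ) :
    nbhd (PiGraph Θ) (SBlock Θ σ) ∩ SBlock Θ τ ≠ SBlock Θ τ := by
  intro heq
  obtain ⟨s, hs, hσs⟩ := hΘ.exists_mem_sBlock_not_mem hsym hreg hkv hτσ
  obtain ⟨hsσ, -⟩ := heq ▸ hs
  simp only [nbhd, Set.mem_iUnion] at hsσ
  obtain ⟨t, ht, hts⟩ := hsσ
  exact hσs ((hΘ.exists_adj_mem_sBlock_iff s σ).1 ⟨t, ht, hts.symm⟩)

end SelfPairedSymmOrbitDStar

end

/-- Properties of the double star graph `Π(G,Θ)` for a self-paired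
`X`-symmetric orbit `Θ` on the `k`-double stars of an `X`-symmetric graph `G` of valency
`v ≥ 2`, `1 ≤ k ≤ v − 1`:  `Π` is `X`-symmetric, the blocks `S_τ` form a nontrivial
`X`-invariant partition of its vertex set, the quotient has valency at least 2, `Π` is not
a multicover of the quotient, `τ ↦ S_τ` is a graph isomorphism from `G` onto the quotient,
and `D(S_τ)` is isomorphic to the dual of the design `𝔻(τ)`. -/
theorem doubleStarGraph_properties {V X : Type*} [Fintype V] [Group X] [MulAction X V]
    (G : SimpleGraph V) (v : ℕ) (hv : 2 ≤ v) (hreg : Regular G v) (hsym : XSymm X G)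
    (k : ℕ) (hk1 : 1 ≤ k) (hk2 : k ≤ v - 1)
    (Θ : Set ((V × Set V) × (V × Set V))) (hΘ : SelfPairedSymmOrbitDStar X G k Θ) :
    -- `Π(G,Θ)` is `X`-symmetric
    RelXSymm X (StarMaps X Θ) (PiGraph Θ) ∧
    -- the blocks `S_τ` form a nontrivial `X`-invariant partition of the vertex set
    Setoid.IsPartition {S : Set ↥(StSet Θ) | ∃ τ : V, S = SBlock Θ τ} ∧
    (∀ (x : X) (τ : V),
      {t : ↥(StSet Θ) | ∃ s ∈ SBlock Θ τ, StarMaps X Θ x s t} = SBlock Θ (x • τ)) ∧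
    (∀ τ : V, 1 < (SBlock Θ τ).ncard ∧
      (SBlock Θ τ).ncard < (Set.univ : Set ↥(StSet Θ)).ncard) ∧
    -- the quotient has valency at least `2`
    (∀ τ : V, 2 ≤ ({σ : V | QAdj (PiGraph Θ) (SBlock Θ τ) (SBlock Θ σ)}).ncard) ∧
    -- `Π(G,Θ)` is not a multicover of the quotient
    (∀ τ σ : V, QAdj (PiGraph Θ) (SBlock Θ τ) (SBlock Θ σ) →
      nbhd (PiGraph Θ) (SBlock Θ σ) ∩ SBlock Θ τ ≠ SBlock Θ τ) ∧
    -- `τ ↦ S_τ` is a graph isomorphism from `G` onto the quotient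
    Function.Injective (fun τ : V => SBlock Θ τ) ∧
    (∀ τ σ : V, G.Adj τ σ ↔ QAdj (PiGraph Θ) (SBlock Θ τ) (SBlock Θ σ)) ∧
    -- `D(S_τ) ≅ 𝔻*(τ)`
    (∀ τ : V, ∃ f : {σ : V | QAdj (PiGraph Θ) (SBlock Θ τ) (SBlock Θ σ)} ≃
        {σ : V | G.Adj τ σ},
      ∀ s : ↥(StSet Θ), s ∈ SBlock Θ τ →
        ∀ C : {σ : V | QAdj (PiGraph Θ) (SBlock Θ τ) (SBlock Θ σ)},
          ((∃ t ∈ SBlock Θ (C : V), (PiGraph Θ).Adj s t) ↔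
            (f C : V) ∈ (s : V × Set V).2)) := by
  have hvt : VertexTrans X V := hsym.2.1
  have hkv : k < v := by omega
  have hadj : ∀ τ σ : V, G.Adj τ σ ↔ QAdj (PiGraph Θ) (SBlock Θ τ) (SBlock Θ σ) :=
    fun τ σ => (hΘ.qAdj_sBlock_iff hsym).symm
  have hnbr : ∀ τ : V, ∃ σ, G.Adj τ σ := fun τ =>
    Set.nonempty_of_ncard_ne_zero (s := G.neighborSet τ) (by rw [hreg τ]; omega)
  refine ⟨hΘ.relXSymm, Setoid.isPartition_setOf_eq_preimage_singleton (hΘ.surjective_fst hvt),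
    hΘ.setOf_starMaps_sBlock, fun τ => ⟨hΘ.one_lt_ncard_sBlock hsym hreg hk1 hkv τ, ?_⟩,
    fun τ => ?_, fun τ σ hτσ => hΘ.nbhd_sBlock_inter_ne hsym hreg hkv ((hadj τ σ).2 hτσ),
    hΘ.sBlock_injective hvt, hadj, fun τ => ?_⟩
  · obtain ⟨σ, hτσ⟩ := hnbr τ
    exact hΘ.ncard_sBlock_lt hvt hτσ
  · rw [hΘ.setOf_qAdj_sBlock hsym]
    exact hv.trans_eq (hreg τ).symm
  · exact ⟨Equiv.setCongr (hΘ.setOf_qAdj_sBlock hsym τ),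
      fun s _ C => hΘ.exists_adj_mem_sBlock_iff s C⟩
end

section
/- Let Σ be an X-symmetric graph of valency v ≥ 2 and τ ∈ V(Σ). If there exists an X_τ-flag-transitive 1-(v,k,r) design D(τ) with point set Σ(τ), where 1 ≤ k ≤ v−1, such that r/m(D(τ)) is odd, then there exists a self-paired X-symmetric orbit Θ on the k-double stars of Σ. -/
open Pointwise

/-!
Pick a neighbour `σ` of `τ` on some block and an arc-reversing `g` with `g • τ = σ`,
`g • σ = τ`. Then `g²` fixes `τ` and `σ`, so it permutes the traces of the blocks through `σ`;
there are `r / m(D) = r'` of them, an odd number. Hence some odd power `g^(2m)` fixes a trace `L`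
through `σ`, and `y = g^m` still reverses the arc `(τ, σ)` while `y²` fixes the star `(τ, L)`.
The orbit of the double star `((τ, L), y • (τ, L))` is therefore self-paired, and flag-transitivity
makes `(τ, L)` a symmetric star.
-/

open MulAction

theorem Set.ncard_image_mul_of_ncard_fiber {α β : Type*} [Finite α] {f : α → β} {s : Set α}
    {n : ℕ} (hsat : ∀ a ∈ s, ∀ a', f a' = f a → a' ∈ s)
    (hfib : ∀ a ∈ s, {a' | f a' = f a}.ncard = n) :
    (f '' s).ncard * n = s.ncard := by
  classical
  lift s to Finset α using s.toFinite
  rw [← Finset.coe_image, Set.ncard_coe_finset, Set.ncard_coe_finset,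
    Finset.card_eq_sum_card_image f s, Finset.sum_const_nat]
  rintro _ hb
  obtain ⟨a, ha, rfl⟩ := Finset.mem_image.mp hb
  rw [← hfib a (Finset.mem_coe.2 ha), ← Set.ncard_coe_finset, Finset.coe_filter]
  congr 1
  ext a'
  exact ⟨fun h => h.2, fun h => ⟨hsat a ha a' h, h⟩⟩

theorem Equiv.Perm.exists_odd_pow_fixed_point {α : Type*} [Fintype α]
    (hα : Odd (Fintype.card α)) (e : Equiv.Perm α) : ∃ m, Odd m ∧ ∃ a, (e ^ m) a = a := by
  have : Fact (Nat.Prime 2) := ⟨Nat.prime_two⟩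
  have hord : orderOf e ≠ 0 := (orderOf_pos e).ne'
  -- `m` is the odd part of the order of `e`, so `e ^ m` has `2`-power order
  refine ⟨ordCompl[2] (orderOf e), ?_, ?_⟩
  · exact Nat.odd_iff.2 (Nat.two_dvd_ne_zero.mp (Nat.not_dvd_ordCompl Nat.prime_two hord))
  · refine Equiv.Perm.exists_fixed_point_of_prime (p := 2) (n := (orderOf e).factorization 2)
      (Nat.two_dvd_ne_zero.mpr (Nat.odd_iff.mp hα)) ?_
    rw [← pow_mul, mul_comm, Nat.ordProj_mul_ordCompl_eq_self, pow_orderOf_eq_one]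

theorem exists_odd_pow_smul_eq_of_odd_ncard {G α : Type*} [Group G] [MulAction G α]
    {s : Set α} (hs : Odd s.ncard) (g : G) (hg : ∀ a, g • a ∈ s ↔ a ∈ s) :
    ∃ m, Odd m ∧ ∃ a ∈ s, g ^ m • a = a := by
  have : Fintype s := (Set.finite_of_ncard_ne_zero hs.pos.ne').fintype
  rw [← Nat.card_coe_set_eq, Nat.card_eq_fintype_card] at hs
  obtain ⟨m, hm, ⟨a, ha⟩, hfix⟩ := Equiv.Perm.exists_odd_pow_fixed_point hs
    ((toPerm g).subtypePerm fun a => show toPerm g a ∈ s ↔ a ∈ s from hg a)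
  refine ⟨m, hm, a, ha, ?_⟩
  have : (toPermHom G α g ^ m) a = a := by
    simpa [Equiv.Perm.subtypePerm_pow] using congrArg Subtype.val hfix
  rwa [← map_pow, toPermHom_apply, toPerm_apply] at this

theorem sq_mem_stabilizer_of_swap {G α : Type*} [Group G] [MulAction G α] {g : G} {a b : α}
    (ha : g • a = b) (hb : g • b = a) : g ^ 2 ∈ stabilizer G a := by
  rw [mem_stabilizer_iff, pow_two, mul_smul, ha, hb]

theorem pow_smul_eq_of_swap_of_odd {G α : Type*} [Group G] [MulAction G α] {g : G} {a b : α}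
    (ha : g • a = b) (hb : g • b = a) {m : ℕ} (hm : Odd m) : g ^ m • a = b := by
  obtain ⟨j, rfl⟩ := hm
  rw [pow_succ, mul_smul, ha, pow_mul]
  exact (stabilizer G b).pow_mem (sq_mem_stabilizer_of_swap hb ha) j

section Incidence

variable {H ι V : Type*} [Group H] [MulAction H ι] [MulAction H V] {Inc : ι → V → Prop}

def tracesThrough (Inc : ι → V → Prop) (p : V) : Set (Set V) :=
  (fun b => {q | Inc b q}) '' {b | Inc b p}

theorem smul_setOf_inc (hInc : ∀ (g : H) b p, Inc b p → Inc (g • b) (g • p)) (g : H) (b : ι) :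
    g • {p | Inc b p} = {p | Inc (g • b) p} := by
  ext q
  rw [Set.mem_smul_set_iff_inv_smul_mem, Set.mem_ofPred_eq, Set.mem_ofPred_eq]
  refine ⟨fun h => ?_, fun h => ?_⟩
  · simpa using hInc g _ _ h
  · simpa using hInc g⁻¹ _ _ h

theorem smul_mem_tracesThrough_iff (hInc : ∀ (g : H) b p, Inc b p → Inc (g • b) (g • p))
    {g : H} {p : V} (hg : g • p = p) (t : Set V) :
    g • t ∈ tracesThrough Inc p ↔ t ∈ tracesThrough Inc p := by
  have key : ∀ g : H, g • p = p → ∀ t ∈ tracesThrough Inc p, g • t ∈ tracesThrough Inc p := by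
    rintro g hg _ ⟨b, hb, rfl⟩
    refine ⟨g • b, ?_, (smul_setOf_inc hInc g b).symm⟩
    simpa only [Set.mem_ofPred_eq, hg] using hInc g b p hb
  refine ⟨fun h => ?_, key g hg t⟩
  simpa using key g⁻¹ (inv_smul_eq_iff.mpr hg.symm) _ h

theorem ncard_tracesThrough_mul [Finite ι] {mm : ℕ}
    (hmult : ∀ b : ι, {b' | {q | Inc b' q} = {q | Inc b q}}.ncard = mm) (p : V) :
    (tracesThrough Inc p).ncard * mm = {b | Inc b p}.ncard :=
  Set.ncard_image_mul_of_ncard_fiber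
    (fun _ hb b' h => show p ∈ {q | Inc b' q} from h ▸ hb) (fun b _ => hmult b)

end Incidence

section Stars

variable {X V : Type*} [Group X] [MulAction X V] {G : SimpleGraph V} {k : ℕ}

theorem IsStar.smul (hadj : AdjPres X G) {s : V × Set V} (hs : IsStar G k s) (x : X) :
    IsStar G k (x • s) := by
  refine ⟨?_, (Set.ncard_smul_set x s.2).trans hs.2⟩
  rintro _ ⟨p, hp, rfl⟩
  exact hadj x _ _ (hs.1 hp)

theorem IsDStar.smul (hadj : AdjPres X G) {d : (V × Set V) × (V × Set V)} (hd : IsDStar G k d)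
    (x : X) : IsDStar G k (x • d) :=
  ⟨hd.1.smul hadj x, hd.2.1.smul hadj x, Set.smul_mem_smul_set hd.2.2.1,
    Set.smul_mem_smul_set hd.2.2.2⟩

theorem starSymmetric_setOf_inc {ι : Type*} {τ : V} [MulAction (stabilizer X τ) ι]
    {Inc : ι → V → Prop}
    (hInc : ∀ (g : stabilizer X τ) b p, Inc b p → Inc (g • b) ((g : X) • p)) {b : ι}
    (hflag : ∀ p q, Inc b p → Inc b q → ∃ g : stabilizer X τ, g • b = b ∧ (g : X) • p = q) :
    StarSymmetric X (τ, {p | Inc b p}) := by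
  intro p hp q hq
  obtain ⟨g, hgb, hgpq⟩ := hflag p q hp hq
  refine ⟨g, Prod.ext g.2 ?_, hgpq⟩
  change g • {p | Inc b p} = {p | Inc b p}
  rw [smul_setOf_inc hInc, hgb]

theorem stSet_orbit_pair (y : X) (s : V × Set V) :
    StSet (orbit X (s, y • s)) = orbit X s := by
  ext t
  constructor
  · rintro ⟨_, ⟨x, rfl⟩, rfl | rfl⟩
    exacts [⟨x, rfl⟩, ⟨x * y, mul_smul x y s⟩]
  · rintro ⟨x, rfl⟩
    exact ⟨x • (s, y • s), mem_orbit _ x, Or.inl rfl⟩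

theorem starsXSymm_orbit {s : V × Set V} (hs : StarSymmetric X s) :
    StarsXSymm X (orbit X s) := by
  refine ⟨⟨s, mem_orbit_self s⟩, ?_, s, mem_orbit_self s, hs⟩
  rintro _ ⟨x₁, rfl⟩ _ ⟨x₂, rfl⟩
  exact ⟨x₂ * x₁⁻¹, by rw [mul_smul, inv_smul_smul]⟩

/-- An element `y` with `y² • s = s` maps `(s, y • s)` to its reverse `(y • s, s)`. -/
theorem selfPairedSymmOrbitDStar_orbit_pair (hadj : AdjPres X G) {y : X} {s : V × Set V}
    (hs : IsStar G k s) (hsymm : StarSymmetric X s) (hy : y • y • s = s)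
    (hL : (y • s).1 ∈ s.2) (hR : s.1 ∈ (y • s).2) :
    SelfPairedSymmOrbitDStar X G k (orbit X (s, y • s)) := by
  have hd : IsDStar G k (s, y • s) := ⟨hs, hs.smul hadj y, hL, hR⟩
  refine ⟨?_, ⟨_, mem_orbit_self _, rfl⟩, ?_, ?_⟩
  · rintro _ ⟨x, rfl⟩
    exact hd.smul hadj x
  · rintro _ ⟨x, rfl⟩
    refine ⟨x * y, ?_⟩
    simp only [Prod.smul_mk, mul_smul, hy]
  · rw [stSet_orbit_pair]
    exact starsXSymm_orbit hsymm

theorem selfPairedSymmOrbitDStar_orbit_pow (hadj : AdjPres X G) {g : X} {τ σ : V} {L : Set V}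
    (hgτ : g • τ = σ) (hgσ : g • σ = τ) {m : ℕ} (hm : Odd m) (hL : (g ^ 2) ^ m • L = L)
    (hσL : σ ∈ L) (hs : IsStar G k (τ, L)) (hsymm : StarSymmetric X (τ, L)) :
    SelfPairedSymmOrbitDStar X G k (orbit X ((τ, L), g ^ m • (τ, L))) := by
  have hτ : g ^ m • τ = σ := pow_smul_eq_of_swap_of_odd hgτ hgσ hm
  have hσ : g ^ m • σ = τ := pow_smul_eq_of_swap_of_odd hgσ hgτ hm
  have hLL : g ^ m • g ^ m • L = L := by
    rwa [← mul_smul, ← pow_add, ← two_mul, pow_mul]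
  refine selfPairedSymmOrbitDStar_orbit_pair hadj hs hsymm ?_ ?_ ?_
  · simp only [Prod.smul_mk, hτ, hσ, hLL]
  · simpa only [Prod.smul_mk, hτ] using hσL
  · simpa only [Prod.smul_mk, ← hσ] using Set.smul_mem_smul_set hσL

end Stars

theorem exists_selfPaired_dstar_orbit_general {V X : Type*} [Group X] [MulAction X V]
    (G : SimpleGraph V) (hsym : XSymm X G)
    (τ : V) (k r : ℕ) (hk1 : 1 ≤ k)
    (ι : Type*) [Fintype ι] [Nonempty ι] (Inc : ι → V → Prop)
    [MulAction (MulAction.stabilizer X τ) ι]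
    (hpts : ∀ (b : ι) (p : V), Inc b p → G.Adj τ p)
    (hblocksize : ∀ b : ι, ({p : V | Inc b p}).ncard = k)
    (hptdeg : ∀ p : V, G.Adj τ p → ({b : ι | Inc b p}).ncard = r)
    (hcompat : ∀ (g : MulAction.stabilizer X τ) (b : ι) (p : V),
      Inc b p → Inc (g • b) ((g : X) • p))
    (hflag : ∀ (b b' : ι) (p p' : V), Inc b p → Inc b' p' →
      ∃ g : MulAction.stabilizer X τ, g • b = b' ∧ (g : X) • p = p')
    (mm r' : ℕ)
    (hmult : ∀ b : ι, ({b' : ι | {p : V | Inc b' p} = {p : V | Inc b p}}).ncard = mm)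
    (hr : r = mm * r') (hodd : Odd r') :
    ∃ Θ : Set ((V × Set V) × (V × Set V)), SelfPairedSymmOrbitDStar X G k Θ := by
  obtain ⟨hadj, -, harc⟩ := hsym
  obtain ⟨b₀⟩ := ‹Nonempty ι›
  obtain ⟨σ, hσ⟩ : {p | Inc b₀ p}.Nonempty :=
    Set.nonempty_of_ncard_ne_zero (by rw [hblocksize]; omega)
  have hτσ : G.Adj τ σ := hpts b₀ σ hσ
  obtain ⟨g, hg⟩ := harc (τ, σ) (σ, τ) hτσ hτσ.symm
  have hgτ : g • τ = σ := congrArg Prod.fst hg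
  have hgσ : g • σ = τ := congrArg Prod.snd hg
  have hmm : 0 < mm := hmult b₀ ▸ (Set.ncard_pos (Set.toFinite _)).mpr ⟨b₀, rfl⟩
  have hT : (tracesThrough Inc σ).ncard = r' := by
    have := ncard_tracesThrough_mul hmult σ
    rw [hptdeg σ hτσ, hr, mul_comm] at this
    exact Nat.eq_of_mul_eq_mul_left hmm this
  let z : stabilizer X τ := ⟨g ^ 2, sq_mem_stabilizer_of_swap hgτ hgσ⟩
  obtain ⟨m, hm, _, ⟨b, hbσ, rfl⟩, hfix⟩ := exists_odd_pow_smul_eq_of_odd_ncard (hT ▸ hodd) z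
    (smul_mem_tracesThrough_iff hcompat (sq_mem_stabilizer_of_swap hgσ hgτ))
  exact ⟨_, selfPairedSymmOrbitDStar_orbit_pow hadj hgτ hgσ hm hfix hbσ
    ⟨fun p hp => hpts b p hp, hblocksize b⟩ (starSymmetric_setOf_inc hcompat (hflag b b))⟩

/-- Let `G` be an `X`-symmetric graph of valency `v ≥ 2` and `τ` a
vertex.  If there is an `X_τ`-flag-transitive `1-(v,k,r)` design on `G(τ)` (blocks
indexed by `ι`, with incidence `Inc`), with `1 ≤ k ≤ v − 1`, whose multiplicity `mm`
satisfies `r = mm * r'` with `r'` odd, then there exists a self-paired `X`-symmetric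
orbit on the `k`-double stars of `G`. -/
theorem exists_selfPaired_dstar_orbit {V X : Type*} [Fintype V] [Group X] [MulAction X V]
    (G : SimpleGraph V) (v : ℕ) (hv : 2 ≤ v) (hreg : Regular G v) (hsym : XSymm X G)
    (τ : V) (k r : ℕ) (hk1 : 1 ≤ k) (hk2 : k ≤ v - 1)
    (ι : Type*) [Fintype ι] [Nonempty ι] (Inc : ι → V → Prop)
    [MulAction (MulAction.stabilizer X τ) ι]
    (hpts : ∀ (b : ι) (p : V), Inc b p → G.Adj τ p)
    (hblocksize : ∀ b : ι, ({p : V | Inc b p}).ncard = k)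
    (hptdeg : ∀ p : V, G.Adj τ p → ({b : ι | Inc b p}).ncard = r)
    (hcompat : ∀ (g : MulAction.stabilizer X τ) (b : ι) (p : V),
      Inc b p → Inc (g • b) ((g : X) • p))
    (hflag : ∀ (b b' : ι) (p p' : V), Inc b p → Inc b' p' →
      ∃ g : MulAction.stabilizer X τ, g • b = b' ∧ (g : X) • p = p')
    (mm r' : ℕ)
    (hmult : ∀ b : ι, ({b' : ι | {p : V | Inc b' p} = {p : V | Inc b p}}).ncard = mm)
    (hr : r = mm * r') (hodd : Odd r') :
    ∃ Θ : Set ((V × Set V) × (V × Set V)), SelfPairedSymmOrbitDStar X G k Θ :=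
  exists_selfPaired_dstar_orbit_general G hsym τ k r hk1 ι Inc hpts hblocksize hptdeg hcompat hflag
    mm r' hmult hr hodd
end

section
/- Let Γ be a finite X-symmetric graph with a nontrivial X-invariant partition B of V(Γ) such that val(Γ_B) ≥ 2 and Γ is not a multicover of Γ_B, and let B ∈ B. If m*(Γ,B) = 1 and m(D(B)) = 1, then the permutation group induced by the setwise stabilizer X_B on B is isomorphic to the permutation group induced by X_B on the neighbourhood Γ_B(B) of B in Γ_B. -/
open Pointwise

/-- A `k`-star of the quotient graph of `Γ` modulo `P`, given as a pair `(B, 𝒮)` of a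
block and a set of blocks adjacent to it. -/
def QIsStar {V : Type*} (Γ : SimpleGraph V) (P : Set (Set V)) (k : ℕ)
    (s : Set V × Set (Set V)) : Prop :=
  s.1 ∈ P ∧ (∀ C ∈ s.2, C ∈ P ∧ QAdj Γ s.1 C) ∧ s.2.ncard = k

/-- A `k`-double star of the quotient graph of `Γ` modulo `P`. -/
def QIsDStar {V : Type*} (Γ : SimpleGraph V) (P : Set (Set V)) (k : ℕ)
    (d : (Set V × Set (Set V)) × (Set V × Set (Set V))) : Prop :=
  QIsStar Γ P k d.1 ∧ QIsStar Γ P k d.2 ∧ d.2.1 ∈ d.1.2 ∧ d.1.1 ∈ d.2.2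

/-- The star `s(B, Γ_B(u))` of the quotient graph. -/
def qStarOf {V : Type*} (Γ : SimpleGraph V) (P : Set (Set V)) (B : Set V) (u : V) :
    Set V × Set (Set V) :=
  (B, {C | C ∈ P ∧ u ∈ nbhd Γ C})

/-- The set `S = {s(B, Γ_B(u)) : u ∈ B ∈ P}` of stars of the quotient graph. -/
def qStarSet {V : Type*} (Γ : SimpleGraph V) (P : Set (Set V)) :
    Set (Set V × Set (Set V)) :=
  {s | ∃ B ∈ P, ∃ u ∈ B, s = qStarOf Γ P B u}

/-- The set `Θ` of double stars `(s(B,Γ_B(u)), s(C,Γ_B(w)))` with `(u,w)` an arc of `Γ`. -/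
def qTheta {V : Type*} (Γ : SimpleGraph V) (P : Set (Set V)) :
    Set ((Set V × Set (Set V)) × (Set V × Set (Set V))) :=
  {d | ∃ B ∈ P, ∃ C ∈ P, ∃ u ∈ B, ∃ w ∈ C, Γ.Adj u w ∧
    d = (qStarOf Γ P B u, qStarOf Γ P C w)}

/-- The block `B_u = B ∩ ⋂_{C ∈ Γ_B(u)} Γ(C)` of the refined partition. -/
def underBlock {V : Type*} (Γ : SimpleGraph V) (P : Set (Set V)) (B : Set V) (u : V) :
    Set V :=
  B ∩ ⋂ C ∈ {C : Set V | C ∈ P ∧ u ∈ nbhd Γ C}, nbhd Γ C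

/-- The refined partition `B̲ = {B_u : u ∈ B ∈ P}`. -/
def underPartition {V : Type*} (Γ : SimpleGraph V) (P : Set (Set V)) : Set (Set V) :=
  {S | ∃ B ∈ P, ∃ u ∈ B, S = underBlock Γ P B u}

/-- The permutation group induced on a set `U` of vertices by the setwise stabilizer of
`U` in `X`. -/
def inducedOnSet (X : Type*) {V : Type*} [Group X] [MulAction X V] (U : Set V) :
    Subgroup (Equiv.Perm ↥U) where
  carrier := {e | ∃ x : X, x • U = U ∧ ∀ u : ↥U, (e u : V) = x • (u : V)}
  one_mem' := ⟨1, one_smul _ _, fun u => by simp⟩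
  mul_mem' := by
    rintro e f ⟨x, hxU, hx⟩ ⟨y, hyU, hy⟩
    refine ⟨x * y, by rw [mul_smul, hyU, hxU], fun u => ?_⟩
    rw [Equiv.Perm.mul_apply, hx, hy, mul_smul]
  inv_mem' := by
    rintro e ⟨x, hxU, hx⟩
    refine ⟨x⁻¹, inv_smul_eq_iff.mpr hxU.symm, fun u => ?_⟩
    have h := hx (e⁻¹ u)
    rw [show e (e⁻¹ u) = u from e.apply_symm_apply u] at h
    rw [eq_inv_smul_iff]
    exact h.symm

/-- The permutation group induced on a collection `N` of sets of vertices (e.g. the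
neighbouring blocks of a block `B`) by the setwise stabilizer of `B` in `X`. -/
def inducedOnBlocks (X : Type*) {V : Type*} [Group X] [MulAction X V] (B : Set V)
    (N : Set (Set V)) : Subgroup (Equiv.Perm ↥N) where
  carrier := {e | ∃ x : X, x • B = B ∧ ∀ C : ↥N, (e C : Set V) = x • (C : Set V)}
  one_mem' := ⟨1, one_smul _ _, fun C => by simp⟩
  mul_mem' := by
    rintro e f ⟨x, hxB, hx⟩ ⟨y, hyB, hy⟩
    refine ⟨x * y, by rw [mul_smul, hyB, hxB], fun C => ?_⟩
    rw [Equiv.Perm.mul_apply, hx, hy, mul_smul]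
  inv_mem' := by
    rintro e ⟨x, hxB, hx⟩
    refine ⟨x⁻¹, inv_smul_eq_iff.mpr hxB.symm, fun C => ?_⟩
    have h := hx (e⁻¹ C)
    rw [show e (e⁻¹ C) = C from e.apply_symm_apply C] at h
    rw [eq_inv_smul_iff]
    exact h.symm

/-!
Both permutation groups are images of the block stabilizer `X_B`, so it suffices that the two
kernels agree. An element fixing `B` pointwise preserves each trace `Γ(C) ∩ B`, hence fixes
each neighbouring block `C` since `m(D(B)) = 1`. An element fixing every neighbouring block
maps `u ∈ B` into `B ∩ ⋂_{C ∈ Γ_B(u)} Γ(C)`, which is `{u}` since `m*(Γ,B) = 1`.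
-/

open MulAction

section PermOfStabilizes

variable {G α : Type*} [Group G] [MulAction G α]

namespace Subgroup

def permOfStabilizes (S : Subgroup G) (U : Set α) (hU : ∀ x ∈ S, x • U = U) :
    S →* Equiv.Perm U where
  toFun x :=
    { toFun := fun u => ⟨(x : G) • (u : α), by
        simpa only [hU x x.2] using Set.smul_mem_smul_set (a := (x : G)) u.2⟩
      invFun := fun u => ⟨(x : G)⁻¹ • (u : α), by
        simpa only [hU _ (inv_mem x.2)] using Set.smul_mem_smul_set (a := (x : G)⁻¹) u.2⟩
      left_inv := fun u => Subtype.ext (inv_smul_smul _ _)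
      right_inv := fun u => Subtype.ext (smul_inv_smul _ _) }
  map_one' := Equiv.ext fun u => Subtype.ext (one_smul _ _)
  map_mul' x y := Equiv.ext fun u => Subtype.ext (mul_smul _ _ _)

variable {S : Subgroup G} {U : Set α} {hU : ∀ x ∈ S, x • U = U}

@[simp]
lemma coe_permOfStabilizes_apply (x : S) (u : U) :
    (S.permOfStabilizes U hU x u : α) = (x : G) • (u : α) :=
  rfl

lemma mem_ker_permOfStabilizes {x : S} :
    x ∈ (S.permOfStabilizes U hU).ker ↔ (x : G) ∈ fixingSubgroup G U := by
  simp only [MonoidHom.mem_ker, Equiv.ext_iff, Subtype.ext_iff, coe_permOfStabilizes_apply,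
    Equiv.Perm.coe_one, id_eq, Subtype.forall, mem_fixingSubgroup_iff]

end Subgroup

lemma range_permOfStabilizes_eq_inducedOnSet (U : Set α) :
    ((stabilizer G U).permOfStabilizes U fun _ hx => hx).range = inducedOnSet G U := by
  ext e
  constructor
  · rintro ⟨x, rfl⟩
    exact ⟨x, x.2, fun _ => rfl⟩
  · rintro ⟨x, hxU, hxe⟩
    exact ⟨⟨x, hxU⟩, Equiv.ext fun u => Subtype.ext (hxe u).symm⟩

lemma range_permOfStabilizes_eq_inducedOnBlocks (B : Set α) (N : Set (Set α))
    (hN : ∀ x ∈ stabilizer G B, x • N = N) :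
    ((stabilizer G B).permOfStabilizes N hN).range = inducedOnBlocks G B N := by
  ext e
  constructor
  · rintro ⟨x, rfl⟩
    exact ⟨x, x.2, fun _ => rfl⟩
  · rintro ⟨x, hxB, hxe⟩
    exact ⟨⟨x, hxB⟩, Equiv.ext fun C => Subtype.ext (hxe C).symm⟩

lemma smul_set_inter_eq_of_mem_fixingSubgroup {x : G} {B : Set α}
    (hx : x ∈ fixingSubgroup G B) (S : Set α) : x • S ∩ B = S ∩ B := by
  ext v
  refine and_congr_left fun hv => ?_
  rw [Set.mem_smul_set_iff_inv_smul_mem,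
    inv_smul_eq_iff.mpr ((mem_fixingSubgroup_iff G).mp hx v hv).symm]

end PermOfStabilizes

noncomputable def MonoidHom.rangeEquivOfKerEq {G H K : Type*} [Group G] [Group H] [Group K]
    (f : G →* H) (g : G →* K) (h : f.ker = g.ker) : f.range ≃* g.range :=
  (QuotientGroup.quotientKerEquivRange f).symm.trans
    ((QuotientGroup.quotientMulEquivOfEq h).trans (QuotientGroup.quotientKerEquivRange g))

section QuotientGraph

variable {V X : Type*} [Group X] [MulAction X V] {Γ : SimpleGraph V}

def blockNeighbours (Γ : SimpleGraph V) (P : Set (Set V)) (B : Set V) : Set (Set V) :=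
  {C | C ∈ P ∧ QAdj Γ B C}

lemma mem_nbhd_iff {C : Set V} {u : V} : u ∈ nbhd Γ C ↔ ∃ w ∈ C, Γ.Adj w u := by
  simp [nbhd, SimpleGraph.mem_neighborSet]

lemma AdjPres.smul_nbhd (hA : AdjPres X Γ) (x : X) (C : Set V) :
    x • nbhd Γ C = nbhd Γ (x • C) := by
  ext v
  rw [Set.mem_smul_set_iff_inv_smul_mem, mem_nbhd_iff, mem_nbhd_iff]
  constructor
  · rintro ⟨w, hw, hadj⟩
    exact ⟨x • w, Set.smul_mem_smul_set hw, by simpa using hA x _ _ hadj⟩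
  · rintro ⟨_, ⟨w, hw, rfl⟩, hadj⟩
    exact ⟨w, hw, by simpa using hA x⁻¹ _ _ hadj⟩

lemma AdjPres.qAdj_smul (hA : AdjPres X Γ) (x : X) {B C : Set V} (h : QAdj Γ B C) :
    QAdj Γ (x • B) (x • C) := by
  obtain ⟨hBC, u, hu, w, hw, hadj⟩ := h
  exact ⟨(MulAction.injective x).ne hBC, x • u, Set.smul_mem_smul_set hu,
    x • w, Set.smul_mem_smul_set hw, hA x u w hadj⟩

variable {P : Set (Set V)} {B : Set V}

lemma smul_mem_blockNeighbours (hA : AdjPres X Γ) (hPinv : ∀ x : X, ∀ C ∈ P, x • C ∈ P)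
    {x : X} (hx : x • B = B) {C : Set V} (hC : C ∈ blockNeighbours Γ P B) :
    x • C ∈ blockNeighbours Γ P B :=
  ⟨hPinv x C hC.1, hx ▸ hA.qAdj_smul x hC.2⟩

lemma smul_blockNeighbours (hA : AdjPres X Γ) (hPinv : ∀ x : X, ∀ C ∈ P, x • C ∈ P)
    {x : X} (hx : x • B = B) : x • blockNeighbours Γ P B = blockNeighbours Γ P B := by
  have hx' : x⁻¹ • B = B := inv_smul_eq_iff.mpr hx.symm
  refine subset_antisymm ?_ fun C hC => ?_
  · rintro _ ⟨C, hC, rfl⟩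
    exact smul_mem_blockNeighbours hA hPinv hx hC
  · exact ⟨x⁻¹ • C, smul_mem_blockNeighbours hA hPinv hx' hC, smul_inv_smul x C⟩

lemma smul_eq_of_mem_fixingSubgroup (hA : AdjPres X Γ) (hPinv : ∀ x : X, ∀ C ∈ P, x • C ∈ P)
    (htrace : ∀ C D : Set V, C ∈ P → D ∈ P → QAdj Γ B C → QAdj Γ B D →
      nbhd Γ C ∩ B = nbhd Γ D ∩ B → C = D)
    {x : X} (hx : x ∈ fixingSubgroup X B) {C : Set V} (hC : C ∈ blockNeighbours Γ P B) :
    x • C = C := by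
  have hxC := smul_mem_blockNeighbours hA hPinv (fixingSubgroup_le_stabilizer X B hx) hC
  refine htrace _ _ hxC.1 hC.1 hxC.2 hC.2 ?_
  rw [← hA.smul_nbhd, smul_set_inter_eq_of_mem_fixingSubgroup hx]

lemma mem_underBlock_self {u : V} (hu : u ∈ B) : u ∈ underBlock Γ P B u :=
  ⟨hu, Set.mem_iInter₂.mpr fun _ hC => hC.2⟩

lemma underBlock_eq_singleton {u : V} (hu : u ∈ B) (h : (underBlock Γ P B u).ncard = 1) :
    underBlock Γ P B u = {u} := by
  obtain ⟨a, ha⟩ := Set.ncard_eq_one.mp h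
  have hua : u ∈ underBlock Γ P B u := mem_underBlock_self hu
  rw [ha, Set.mem_singleton_iff] at hua
  rw [ha, hua]

/-- The blocks `C` with `u ∈ Γ(C)` are `B` itself and neighbours of `B`. -/
lemma smul_mem_underBlock (hA : AdjPres X Γ) {x : X} (hxB : x • B = B)
    (hx : x ∈ fixingSubgroup X (blockNeighbours Γ P B)) {u : V} (hu : u ∈ B) :
    x • u ∈ underBlock Γ P B u := by
  refine ⟨hxB ▸ Set.smul_mem_smul_set hu, Set.mem_iInter₂.mpr ?_⟩
  rintro C ⟨hCP, huC⟩
  have hxC : x • C = C := by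
    by_cases hCB : C = B
    · rwa [hCB]
    · obtain ⟨w, hw, hadj⟩ := mem_nbhd_iff.mp huC
      exact (mem_fixingSubgroup_iff X).mp hx C
        ⟨hCP, Ne.symm hCB, u, hu, w, hw, hadj.symm⟩
  rw [← hxC, ← hA.smul_nbhd]
  exact Set.smul_mem_smul_set huC

lemma mem_fixingSubgroup_iff_mem_fixingSubgroup_blockNeighbours (hA : AdjPres X Γ)
    (hPinv : ∀ x : X, ∀ C ∈ P, x • C ∈ P)
    (hsingle : ∀ u ∈ B, underBlock Γ P B u = {u})
    (htrace : ∀ C D : Set V, C ∈ P → D ∈ P → QAdj Γ B C → QAdj Γ B D →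
      nbhd Γ C ∩ B = nbhd Γ D ∩ B → C = D)
    {x : X} (hxB : x • B = B) :
    x ∈ fixingSubgroup X B ↔ x ∈ fixingSubgroup X (blockNeighbours Γ P B) := by
  refine ⟨fun hx => (mem_fixingSubgroup_iff X).mpr fun C hC => ?_,
    fun hx => (mem_fixingSubgroup_iff X).mpr fun u hu => ?_⟩
  · exact smul_eq_of_mem_fixingSubgroup hA hPinv htrace hx hC
  · simpa only [hsingle u hu, Set.mem_singleton_iff] using smul_mem_underBlock hA hxB hx hu

end QuotientGraph

theorem induced_on_block_iso_induced_on_neighbours_general {V X : Type*} [Group X]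
    [MulAction X V] (Γ : SimpleGraph V) (hsym : XSymm X Γ)
    (P : Set (Set V)) (hP : XInvariantPartition X P)
    (B : Set V) (hB : B ∈ P)
    (hmstar : ∀ B' ∈ P, ∀ u ∈ B', (underBlock Γ P B' u).ncard = 1)
    (hmD : ∀ C D : Set V, C ∈ P → D ∈ P → QAdj Γ B C → QAdj Γ B D →
      nbhd Γ C ∩ B = nbhd Γ D ∩ B → C = D) :
    Nonempty (inducedOnSet X B ≃*
      inducedOnBlocks X B {C : Set V | C ∈ P ∧ QAdj Γ B C}) := by
  have hA : AdjPres X Γ := hsym.1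
  have hN : ∀ x ∈ stabilizer X B, x • blockNeighbours Γ P B = blockNeighbours Γ P B :=
    fun _ hx => smul_blockNeighbours hA hP.2 hx
  let φ := (stabilizer X B).permOfStabilizes B fun _ hx => hx
  let ψ := (stabilizer X B).permOfStabilizes (blockNeighbours Γ P B) hN
  have hker : φ.ker = ψ.ker := by
    ext x
    exact Subgroup.mem_ker_permOfStabilizes.trans <|
      (mem_fixingSubgroup_iff_mem_fixingSubgroup_blockNeighbours hA hP.2
        (fun u hu => underBlock_eq_singleton hu (hmstar B hB u hu)) hmD x.2).trans
        Subgroup.mem_ker_permOfStabilizes.symm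
  exact ⟨(MulEquiv.subgroupCongr (range_permOfStabilizes_eq_inducedOnSet B)).symm.trans <|
    (φ.rangeEquivOfKerEq ψ hker).trans <|
      MulEquiv.subgroupCongr (range_permOfStabilizes_eq_inducedOnBlocks B _ hN)⟩

/-- Let `Γ` be a finite `X`-symmetric graph with a nontrivial
`X`-invariant partition `P` such that the quotient has valency at least 2 and `Γ` is not
a multicover of the quotient, and let `B ∈ P`.  If `m*(Γ,P) = 1` and `m(D(B)) = 1`, then
the permutation group induced by the setwise stabilizer `X_B` on `B` is isomorphic to the
permutation group induced by `X_B` on the set of blocks adjacent to `B`. -/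
theorem induced_on_block_iso_induced_on_neighbours {V X : Type*} [Fintype V] [Group X]
    [MulAction X V] (Γ : SimpleGraph V) (hsym : XSymm X Γ)
    (P : Set (Set V)) (hP : XInvariantPartition X P) (hPnt : NontrivialBlocks P)
    (b : ℕ) (hb : 2 ≤ b) (hqreg : Regular (quotGraph Γ P) b)
    (hnmc : ∀ B C : ↥P, (quotGraph Γ P).Adj B C → nbhd Γ ↑C ∩ ↑B ≠ (↑B : Set V))
    (B : Set V) (hB : B ∈ P)
    (hmstar : ∀ B' ∈ P, ∀ u ∈ B', (underBlock Γ P B' u).ncard = 1)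
    (hmD : ∀ C D : Set V, C ∈ P → D ∈ P → QAdj Γ B C → QAdj Γ B D →
      nbhd Γ C ∩ B = nbhd Γ D ∩ B → C = D) :
    Nonempty (inducedOnSet X B ≃*
      inducedOnBlocks X B {C : Set V | C ∈ P ∧ QAdj Γ B C}) :=
  induced_on_block_iso_induced_on_neighbours_general Γ hsym P hP B hB hmstar hmD
end
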